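/- For every integer n ≥ 0: ∑_{r=-∞}^{∞} (-1)^r q^{r^2} [2n choose n - r]_q = (q; q^2)_n, where (q;q^2)_n = ∏_{j=0}^{n-1}(1 - q^{2j+1}). -/

import Mathlib

open Finset

noncomputable section

abbrev F := RatFunc ℚ

/-- The variable `q`, a transcendental element. -/
def q : F := RatFunc.X

/-- `(b;b)_n = ∏_{i=1}^n (1 - b^i)` -/
def pq (b : F) (n : ℕ) : F := ∏ i ∈ Finset.range n, (1 - b ^ (i + 1))

/-- Gaussian binomial coefficient in base `b`, zero when `k < 0` or `k > a`. -/
def qbin (b : F) (a k : ℤ) : F :=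
  if 0 ≤ k ∧ k ≤ a then pq b a.toNat / (pq b k.toNat * pq b (a - k).toNat) else 0

/-- Primed Gaussian binomial: equals 1 when `a < 0` and `k = 0`. -/
def qbin' (b : F) (a k : ℤ) : F :=
  if a < 0 ∧ k = 0 then 1 else qbin b a k


/-!
Write `S_t(m, s) = ∑_r (-1)^r b^(r² + t r) [m, s - r]_b`. The q-Pascal rule
`[m+1, k] = b^(m+1-k) [m, k-1] + [m, k]` gives `S_t(m+1, s) = b^(m+1-s) S_{t+1}(m, s-1) + S_t(m, s)`,
the shift `r ↦ r - 1` gives `S_t(m, s-1) = -b^(1-t) S_{t-2}(m, s)`, and `r ↦ -r` together with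
the symmetry of the Gaussian binomials gives `S_t(m, s) = S_{-t}(m, m - s)`. Combining these,
`S_0(2n+2, n+1)` is a combination of `S_{-1}, S_0, S_1` at `(2n, n)` in which `S_{-1}` and `S_1`
cancel, leaving `S_0(2n+2, n+1) = (1 - b^(2n+1)) S_0(2n, n)`.
-/

lemma pq_succ (b : F) (m : ℕ) : pq b (m + 1) = pq b m * (1 - b ^ (m + 1)) :=
  prod_range_succ _ _

section GaussianBinomial

variable {b : F}

lemma pq_ne_zero (hb : ∀ i : ℕ, b ^ (i + 1) ≠ 1) (m : ℕ) : pq b m ≠ 0 :=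
  prod_ne_zero_iff.mpr fun i _ => sub_ne_zero.mpr (hb i).symm

lemma qbin_eq_zero_of_neg {a k : ℤ} (hk : k < 0) : qbin b a k = 0 := by
  rw [qbin, if_neg (by omega)]

lemma qbin_eq_zero_of_lt {a k : ℤ} (hk : a < k) : qbin b a k = 0 := by
  rw [qbin, if_neg (by omega)]

lemma qbin_symm (a k : ℤ) : qbin b a (a - k) = qbin b a k := by
  unfold qbin
  by_cases hk : 0 ≤ k ∧ k ≤ a
  · rw [if_pos (by omega), if_pos hk, sub_sub_cancel, mul_comm]
  · rw [if_neg (by omega), if_neg hk]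

lemma qbin_natCast_add (j m : ℕ) :
    qbin b (j + m : ℕ) j = pq b (j + m) / (pq b j * pq b m) := by
  rw [qbin, if_pos (by omega), show ((j + m : ℕ) : ℤ) - j = m by push_cast; ring]
  simp only [Int.toNat_natCast]

lemma qbin_zero_right (hb : ∀ i : ℕ, b ^ (i + 1) ≠ 1) {a : ℤ} (ha : 0 ≤ a) :
    qbin b a 0 = 1 := by
  lift a to ℕ using ha
  have hpq0 : pq b 0 = 1 := prod_range_zero _
  simpa [hpq0, div_self (pq_ne_zero hb a)] using qbin_natCast_add (b := b) 0 a

lemma qbin_self (hb : ∀ i : ℕ, b ^ (i + 1) ≠ 1) {a : ℤ} (ha : 0 ≤ a) : qbin b a a = 1 := by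
  nth_rw 2 [← sub_zero a]
  rw [qbin_symm, qbin_zero_right hb ha]

lemma pq_pascal (hb : ∀ i : ℕ, b ^ (i + 1) ≠ 1) (j m : ℕ) :
    pq b (j + 1 + (m + 1)) / (pq b (j + 1) * pq b (m + 1)) =
      b ^ (m + 1) * (pq b (j + (m + 1)) / (pq b j * pq b (m + 1))) +
        pq b (j + 1 + m) / (pq b (j + 1) * pq b m) := by
  have hsub (i : ℕ) : 1 - b ^ (i + 1) ≠ 0 := sub_ne_zero.mpr (hb i).symm
  rw [show j + 1 + (m + 1) = j + m + 1 + 1 by ring, show j + (m + 1) = j + m + 1 by ring,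
    show j + 1 + m = j + m + 1 by ring, pq_succ b (j + m + 1), pq_succ b j, pq_succ b m]
  field_simp [pq_ne_zero hb, hsub]
  ring

lemma qbin_add_one_left (hb : ∀ i : ℕ, b ^ (i + 1) ≠ 1) {a : ℤ} (ha : 0 ≤ a) (k : ℤ) :
    qbin b (a + 1) k = b ^ (a + 1 - k) * qbin b a (k - 1) + qbin b a k := by
  rcases lt_trichotomy k 0 with hk | rfl | hk
  · rw [qbin_eq_zero_of_neg hk, qbin_eq_zero_of_neg hk, qbin_eq_zero_of_neg (by omega)]
    ring
  · rw [qbin_zero_right hb (by omega), qbin_zero_right hb ha, qbin_eq_zero_of_neg (by omega)]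
    ring
  rcases lt_trichotomy k (a + 1) with hka | rfl | hka
  · obtain ⟨j, rfl⟩ : ∃ j : ℕ, k = j + 1 := ⟨(k - 1).toNat, by omega⟩
    obtain ⟨m, rfl⟩ : ∃ m : ℕ, a = j + m + 1 := ⟨(a - j - 1).toNat, by omega⟩
    have h := pq_pascal hb j m
    simp only [← qbin_natCast_add, ← zpow_natCast] at h
    push_cast at h
    ring_nf at h ⊢
    exact h
  · rw [sub_self, zpow_zero, add_sub_cancel_right, qbin_self hb (by omega), qbin_self hb ha,
      qbin_eq_zero_of_lt (by omega)]
    ring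
  · rw [qbin_eq_zero_of_lt hka, qbin_eq_zero_of_lt (by omega), qbin_eq_zero_of_lt (by omega)]
    ring

end GaussianBinomial

def bilateralSum (b : F) (t m s : ℤ) : F :=
  ∑ᶠ r : ℤ, (-1 : F) ^ r * b ^ (r ^ 2 + t * r) * qbin b m (s - r)

lemma finite_support_of_qbin (b : F) (m s : ℤ) {f : ℤ → F}
    (hf : ∀ r, qbin b m (s - r) = 0 → f r = 0) : f.support.Finite := by
  refine (Set.finite_Icc (s - m) s).subset fun r hr => ?_
  by_contra hout
  rw [Set.mem_Icc, not_and_or, not_le, not_le] at hout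
  refine hr (hf r ?_)
  rcases hout with h | h
  · exact qbin_eq_zero_of_lt (by omega)
  · exact qbin_eq_zero_of_neg (by omega)

section BilateralSum

variable {b : F}

lemma bilateralSum_symm (t m s : ℤ) : bilateralSum b t m s = bilateralSum b (-t) m (m - s) := by
  rw [bilateralSum, ← finsum_comp_equiv (Equiv.neg ℤ)]
  refine finsum_congr fun r => ?_
  rw [Equiv.neg_apply, ← inv_zpow', inv_neg, inv_one, ← qbin_symm]
  ring_nf

lemma bilateralSum_sub_one (hb : b ≠ 0) (t m s : ℤ) :
    bilateralSum b t m (s - 1) = -b ^ (1 - t) * bilateralSum b (t - 2) m s := by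
  rw [bilateralSum, bilateralSum, mul_finsum, ← finsum_comp_equiv (Equiv.subRight (1 : ℤ))]
  refine finsum_congr fun r => ?_
  rw [Equiv.subRight_apply, zpow_sub_one₀ (by norm_num), sub_sub_sub_cancel_right,
    show (r - 1) ^ 2 + t * (r - 1) = (1 - t) + (r ^ 2 + (t - 2) * r) by ring, zpow_add₀ hb]
  ring

lemma bilateralSum_pascal (hb : ∀ i : ℕ, b ^ (i + 1) ≠ 1) (hb0 : b ≠ 0) (t : ℤ) {m : ℤ}
    (hm : 0 ≤ m) (s : ℤ) :
    bilateralSum b t (m + 1) s =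
      b ^ (m + 1 - s) * bilateralSum b (t + 1) m (s - 1) + bilateralSum b t m s := by
  rw [bilateralSum, bilateralSum, bilateralSum, mul_finsum, ← finsum_add_distrib
    (finite_support_of_qbin b m (s - 1) fun r h => by simp [h])
    (finite_support_of_qbin b m s fun r h => by simp [h])]
  refine finsum_congr fun r => ?_
  rw [qbin_add_one_left hb hm, show s - r - 1 = s - 1 - r by ring,
    show m + 1 - (s - r) = (m + 1 - s) + r by ring, zpow_add₀ hb0 (m + 1 - s),
    show r ^ 2 + (t + 1) * r = (r ^ 2 + t * r) + r by ring, zpow_add₀ hb0 _ r]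
  ring

lemma bilateralSum_zero_zero_zero : bilateralSum b 0 0 0 = 1 := by
  rw [bilateralSum, finsum_eq_single _ 0 fun r hr => ?_]
  · simp [qbin, pq]
  · rcases hr.lt_or_gt with h | h
    · rw [qbin_eq_zero_of_lt (by omega), mul_zero]
    · rw [qbin_eq_zero_of_neg (by omega), mul_zero]

lemma bilateralSum_central_succ (hb : ∀ i : ℕ, b ^ (i + 1) ≠ 1) (hb0 : b ≠ 0) {n : ℤ}
    (hn : 0 ≤ n) :
    bilateralSum b 0 (2 * n + 2) (n + 1) = (1 - b ^ (2 * n + 1)) * bilateralSum b 0 (2 * n) n := by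
  have hodd (t : ℤ) : bilateralSum b t (2 * n + 1) n =
      bilateralSum b t (2 * n) n - b ^ (n + 1 - t) * bilateralSum b (t - 1) (2 * n) n := by
    rw [bilateralSum_pascal hb hb0 t (by omega), bilateralSum_sub_one hb0,
      show t + 1 - 2 = t - 1 by ring, show 2 * n + 1 - n = (n + 1 - t) + t by ring,
      zpow_add₀ hb0 (n + 1 - t), show 1 - (t + 1) = -t by ring, zpow_neg]
    field_simp
    ring
  have hsymm : bilateralSum b (-1) (2 * n) n = bilateralSum b 1 (2 * n) n := by
    rw [bilateralSum_symm, neg_neg, show 2 * n - n = n by ring]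
  have hmid : bilateralSum b 0 (2 * n + 1) (n + 1) = bilateralSum b 0 (2 * n + 1) n := by
    rw [bilateralSum_symm, neg_zero, show 2 * n + 1 - (n + 1) = n by ring]
  have hpow : b ^ (n + 1) * b ^ n = b ^ (2 * n + 1) := by
    rw [← zpow_add₀ hb0]
    ring_nf
  rw [show 2 * n + 2 = 2 * n + 1 + 1 by ring, bilateralSum_pascal hb hb0 0 (by omega), hmid,
    add_sub_cancel_right, zero_add, hodd 0, hodd 1, zero_sub, hsymm,
    show 2 * n + 1 + 1 - (n + 1) = n + 1 by ring, sub_zero, add_sub_cancel_right, sub_self]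
  linear_combination (-bilateralSum b 0 (2 * n) n) * hpow

lemma bilateralSum_central (hb : ∀ i : ℕ, b ^ (i + 1) ≠ 1) (hb0 : b ≠ 0) (n : ℕ) :
    bilateralSum b 0 (2 * n) n = ∏ j ∈ range n, (1 - b ^ (2 * j + 1)) := by
  induction n with
  | zero => simpa using bilateralSum_zero_zero_zero
  | succ n ih =>
    rw [prod_range_succ, ← ih, Nat.cast_succ, mul_add_one,
      bilateralSum_central_succ hb hb0 n.cast_nonneg, mul_comm]
    norm_cast

end BilateralSum

lemma q_pow_succ_ne_one (i : ℕ) : q ^ (i + 1) ≠ 1 := by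
  intro h
  have hdeg := congrArg RatFunc.intDegree h
  rw [q, ← RatFunc.algebraMap_X, ← map_pow, RatFunc.intDegree_polynomial] at hdeg
  simp at hdeg
  omega

theorem stmt15 (n : ℕ) :
    (∑ᶠ r : ℤ, (-1 : F) ^ r * q ^ (r ^ 2) * qbin q (2 * (n : ℤ)) ((n : ℤ) - r)) =
      ∏ j ∈ Finset.range n, (1 - q ^ (2 * j + 1)) := by
  simpa [bilateralSum] using bilateralSum_central q_pow_succ_ne_one RatFunc.X_ne_zero n
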